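/- Let uv be an edge of a network G and g a point of G. Then the set of points p on uv such that g is a farthest point from p (i.e., d(p,g)=ecc(p)) is a (possibly empty) subinterval of uv. -/

import Mathlib

open Set

/-- A finite simple undirected network on `n` vertices with positive edge weights. -/
structure WGraph (n : ℕ) where
  adj : Fin n → Fin n → Bool
  symm : ∀ u v, adj u v = adj v u
  loopless : ∀ u, adj u u = false
  w : Fin n → Fin n → ℝ
  wsymm : ∀ u v, w u v = w v u
  wpos : ∀ u v, adj u v = true → 0 < w u v

variable {n : ℕ}

def WGraph.toSimple (G : WGraph n) : SimpleGraph (Fin n) where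
  Adj u v := G.adj u v = true
  symm := ⟨fun u v h => by
    have h' : G.adj u v = true := h
    show G.adj v u = true
    rw [G.symm]; exact h'⟩
  loopless := ⟨fun u h => by
    have h' : G.adj u u = true := h
    simp [G.loopless u] at h'⟩

instance (G : WGraph n) : DecidableRel G.toSimple.Adj :=
  fun u v => inferInstanceAs (Decidable (G.adj u v = true))

/-- Total weight of a walk. -/
noncomputable def WGraph.walkWeight (G : WGraph n) {u v : Fin n}
    (p : G.toSimple.Walk u v) : ℝ :=
  (p.darts.map fun d => G.w d.toProd.1 d.toProd.2).sum

/-- Weighted shortest-path distance between vertices. -/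
noncomputable def WGraph.vdist (G : WGraph n) (u v : Fin n) : ℝ :=
  sInf {x | ∃ p : G.toSimple.Walk u v, x = G.walkWeight p}

/-- Network distance between the point at parameter `a` on edge `uv` and the point at
parameter `b` on edge `st`: the minimum over routes through the endpoints, together with
the direct route along the edge when the two edges coincide. -/
noncomputable def WGraph.pdist (G : WGraph n) (u v : Fin n) (a : ℝ) (s t : Fin n) (b : ℝ) : ℝ :=
  let base := min
    (min (a * G.w u v + G.vdist u s + b * G.w s t)
         (a * G.w u v + G.vdist u t + (1 - b) * G.w s t))
    (min ((1 - a) * G.w u v + G.vdist v s + b * G.w s t)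
         ((1 - a) * G.w u v + G.vdist v t + (1 - b) * G.w s t))
  if u = s ∧ v = t then min (|a - b| * G.w u v) base
  else if u = t ∧ v = s then min (|a - (1 - b)| * G.w u v) base
  else base

/-- Eccentricity of the point at parameter `a` on edge `uv`: the largest network distance
to any point of the network. -/
noncomputable def WGraph.eccOn (G : WGraph n) (u v : Fin n) (a : ℝ) : ℝ :=
  sSup {x | ∃ s t, G.adj s t = true ∧ ∃ b ∈ Icc (0:ℝ) 1, x = G.pdist u v a s t b}

/-- A point of the network: an (oriented) edge together with a parameter in `[0,1]`. -/
abbrev NetPt (n : ℕ) := (Fin n × Fin n) × ℝ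

def WGraph.validPt (G : WGraph n) (p : NetPt n) : Prop :=
  G.adj p.1.1 p.1.2 = true ∧ p.2 ∈ Icc (0:ℝ) 1

noncomputable def WGraph.pdistPt (G : WGraph n) (p q : NetPt n) : ℝ :=
  G.pdist p.1.1 p.1.2 p.2 q.1.1 q.1.2 q.2

noncomputable def WGraph.eccPt (G : WGraph n) (p : NetPt n) : ℝ :=
  G.eccOn p.1.1 p.1.2 p.2

/-- `f` is piecewise affine on `[0,1]` with at most `N` pieces. -/
def PWAffine (f : ℝ → ℝ) (N : ℕ) : Prop :=
  ∃ t : Fin (N + 1) → ℝ, Monotone t ∧ t 0 = 0 ∧ t (Fin.last N) = 1 ∧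
    ∀ i : Fin N, ∃ a b : ℝ, ∀ x ∈ Icc (t i.castSucc) (t i.succ), f x = a * x + b

/-! Let `x ≤ y ≤ z` on `uv`, with `g` farthest from `x` and from `z`, and let `q` be any point.
Distances to `q` are `w`-Lipschitz along the edge, so `d(y, q) ≤ ecc x + (y - x) w` and
`d(y, q) ≤ ecc z + (z - y) w`. A route from `y` to `g` through `u` is `(y - x) w` longer than the
same route from `x`, hence at least `ecc x + (y - x) w`; symmetrically through `v`. A route along
the edge itself reaches `g` on `uv`, and `g` cannot lie strictly between `x` and `z` since
`ecc x + ecc z > (z - x) w`. So every route from `y` to `g` is at least `d(y, q)`. -/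

-- `hac` keeps the peak `m` of the tent `|· - m| w` out of the open interval `(x, z)`.
theorem le_abs_sub_mul_of_le {w x y z m a b c : ℝ} (hxy : x ≤ y) (hyz : y ≤ z)
    (ha : a ≤ |x - m| * w) (hc : c ≤ |z - m| * w) (hac : (z - x) * w < a + c)
    (hb₁ : b ≤ a + (y - x) * w) (hb₂ : b ≤ c + (z - y) * w) : b ≤ |y - m| * w := by
  rcases le_or_gt m x with hmx | hxm
  · rw [abs_of_nonneg (by linarith)] at ha ⊢
    linarith
  rcases le_or_gt z m with hzm | hmz
  · rw [abs_of_nonpos (by linarith)] at hc ⊢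
    linarith
  rw [abs_of_neg (by linarith)] at ha
  rw [abs_of_pos (by linarith)] at hc
  linarith

namespace WGraph

variable (G : WGraph n) {u v s t : Fin n}

theorem ne_of_adj (huv : G.adj u v = true) : u ≠ v :=
  SimpleGraph.Adj.ne (G := G.toSimple) huv

theorem walkWeight_nonneg (p : G.toSimple.Walk u v) : 0 ≤ G.walkWeight p :=
  List.sum_nonneg <| by
    simp only [List.mem_map]
    rintro _ ⟨d, -, rfl⟩
    exact (G.wpos _ _ d.adj).le

theorem walkWeight_cons {m : Fin n} (h : G.toSimple.Adj u m) (p : G.toSimple.Walk m v) :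
    G.walkWeight (.cons h p) = G.w u m + G.walkWeight p := by
  simp [walkWeight]

theorem vdist_nonneg (u v : Fin n) : 0 ≤ G.vdist u v :=
  Real.sInf_nonneg fun _ ⟨p, hp⟩ => hp ▸ G.walkWeight_nonneg p

theorem vdist_pos (hconn : G.toSimple.Connected) (huv : u ≠ v) : 0 < G.vdist u v := by
  have : Nonempty (Fin n) := ⟨u⟩
  obtain ⟨m₀, hm₀⟩ := Finite.exists_min fun m => if G.adj u m then G.w u m else 1
  have hc : 0 < if G.adj u m₀ then G.w u m₀ else 1 := by
    split_ifs with h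
    exacts [G.wpos _ _ h, one_pos]
  refine hc.trans_le (le_csInf ?_ ?_)
  · obtain ⟨p⟩ := hconn.preconnected u v
    exact ⟨_, p, rfl⟩
  · rintro _ ⟨p, rfl⟩
    cases p with
    | nil => exact absurd rfl huv
    | @cons _ m _ h p =>
      have hm := hm₀ m
      rw [if_pos (show G.adj u m = true from h)] at hm
      rw [walkWeight_cons]
      linarith [G.walkWeight_nonneg p]

theorem le_pdist {a b r : ℝ}
    (h₁ : r ≤ a * G.w u v + G.vdist u s + b * G.w s t)
    (h₂ : r ≤ a * G.w u v + G.vdist u t + (1 - b) * G.w s t)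
    (h₃ : r ≤ (1 - a) * G.w u v + G.vdist v s + b * G.w s t)
    (h₄ : r ≤ (1 - a) * G.w u v + G.vdist v t + (1 - b) * G.w s t)
    (h_along : u = s → v = t → r ≤ |a - b| * G.w u v)
    (h_along_rev : ¬(u = s ∧ v = t) → u = t → v = s → r ≤ |a - (1 - b)| * G.w u v) :
    r ≤ G.pdist u v a s t b := by
  unfold pdist
  split_ifs with h h'
  · exact le_min (h_along h.1 h.2) (le_min (le_min h₁ h₂) (le_min h₃ h₄))
  · exact le_min (h_along_rev h h'.1 h'.2) (le_min (le_min h₁ h₂) (le_min h₃ h₄))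
  · exact le_min (le_min h₁ h₂) (le_min h₃ h₄)

variable (u v s t) in
theorem pdist_le_route_us (a b : ℝ) :
    G.pdist u v a s t b ≤ a * G.w u v + G.vdist u s + b * G.w s t := by
  unfold pdist
  split_ifs <;> simp

variable (u v s t) in
theorem pdist_le_route_ut (a b : ℝ) :
    G.pdist u v a s t b ≤ a * G.w u v + G.vdist u t + (1 - b) * G.w s t := by
  unfold pdist
  split_ifs <;> simp

variable (u v s t) in
theorem pdist_le_route_vs (a b : ℝ) :
    G.pdist u v a s t b ≤ (1 - a) * G.w u v + G.vdist v s + b * G.w s t := by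
  unfold pdist
  split_ifs <;> simp

variable (u v s t) in
theorem pdist_le_route_vt (a b : ℝ) :
    G.pdist u v a s t b ≤ (1 - a) * G.w u v + G.vdist v t + (1 - b) * G.w s t := by
  unfold pdist
  split_ifs <;> simp

theorem pdist_le_along (h : u = s ∧ v = t) (a b : ℝ) :
    G.pdist u v a s t b ≤ |a - b| * G.w u v := by
  simp only [pdist, if_pos h, min_le_left]

theorem pdist_le_along_rev (h : ¬(u = s ∧ v = t)) (h' : u = t ∧ v = s) (a b : ℝ) :
    G.pdist u v a s t b ≤ |a - (1 - b)| * G.w u v := by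
  simp only [pdist, if_neg h, if_pos h', min_le_left]

theorem pdist_swap (huv : u ≠ v) (a b : ℝ) :
    G.pdist v u (1 - a) s t b = G.pdist u v a s t b := by
  have h_along : |1 - a - b| = |a - (1 - b)| := by rw [← abs_neg]; ring_nf
  have h_along_rev : |1 - a - (1 - b)| = |a - b| := by rw [← abs_neg]; ring_nf
  unfold pdist
  rw [G.wsymm v u, sub_sub_cancel, h_along, h_along_rev]
  split_ifs <;> first
    | (exfalso; apply huv; grind)
    | rw [min_comm (min _ _)]

theorem pdist_lipschitzWith (huv : G.adj u v = true) (b : ℝ) :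
    LipschitzWith (G.w u v).toNNReal (G.pdist u v · s t b) := by
  set K := (G.w u v).toNNReal
  have hw := G.wpos u v huv
  have hK : (K : ℝ) = G.w u v := Real.coe_toNNReal _ hw.le
  have hmin : ∀ f g : ℝ → ℝ, LipschitzWith K f → LipschitzWith K g →
      LipschitzWith K fun x => min (f x) (g x) := fun f g hf hg => by
    simpa only [max_self] using hf.min hg
  have hpiece : ∀ f : ℝ → ℝ, (∀ x y, |f x - f y| ≤ |x - y| * G.w u v) → LipschitzWith K f :=
    fun f hf => LipschitzWith.of_dist_le_mul fun x y => by
      simpa only [Real.dist_eq, hK, mul_comm (G.w u v)] using hf x y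
  have hincr : ∀ c d, LipschitzWith K fun x => x * G.w u v + c + d := fun c d =>
    hpiece _ fun x y => by
      rw [add_sub_add_right_eq_sub, add_sub_add_right_eq_sub, ← sub_mul, abs_mul, abs_of_pos hw]
  have hdecr : ∀ c d, LipschitzWith K fun x => (1 - x) * G.w u v + c + d := fun c d =>
    hpiece _ fun x y => by
      rw [add_sub_add_right_eq_sub, add_sub_add_right_eq_sub, ← sub_mul, abs_mul, abs_of_pos hw,
        sub_sub_sub_cancel_left, abs_sub_comm]
  have htent : ∀ m, LipschitzWith K fun x => |x - m| * G.w u v := fun m =>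
    hpiece _ fun x y => by
      rw [← sub_mul, abs_mul, abs_of_pos hw]
      refine mul_le_mul_of_nonneg_right ?_ hw.le
      exact (abs_abs_sub_abs_le_abs_sub _ _).trans_eq (by rw [sub_sub_sub_cancel_right])
  unfold pdist
  split_ifs <;> repeat first | apply hmin | apply hincr | apply hdecr | apply htent

theorem pdist_le_pdist_add (huv : G.adj u v = true) (a a' b : ℝ) :
    G.pdist u v a s t b ≤ G.pdist u v a' s t b + |a - a'| * G.w u v := by
  simpa only [Real.coe_toNNReal _ (G.wpos u v huv).le, Real.dist_eq, mul_comm (G.w u v)]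
    using (G.pdist_lipschitzWith huv b).le_add_mul a a'

theorem bddAbove_pdist_set (u v : Fin n) (a : ℝ) :
    BddAbove {x | ∃ s t, G.adj s t = true ∧ ∃ b ∈ Icc (0:ℝ) 1, x = G.pdist u v a s t b} := by
  have : Nonempty (Fin n × Fin n) := ⟨(u, u)⟩
  obtain ⟨e, he⟩ := Finite.exists_max fun e : Fin n × Fin n => G.vdist u e.1 + G.w e.1 e.2
  refine ⟨a * G.w u v + (G.vdist u e.1 + G.w e.1 e.2), ?_⟩
  rintro _ ⟨s, t, hst, b, hb, rfl⟩
  have hbw : b * G.w s t ≤ G.w s t := mul_le_of_le_one_left (G.wpos s t hst).le hb.2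
  linarith [G.pdist_le_route_us u v s t a b, he (s, t)]

variable (u v) in
theorem pdist_le_eccOn (hst : G.adj s t = true) (a : ℝ) {b : ℝ} (hb : b ∈ Icc (0:ℝ) 1) :
    G.pdist u v a s t b ≤ G.eccOn u v a :=
  le_csSup (G.bddAbove_pdist_set u v a) ⟨s, t, hst, b, hb, rfl⟩

theorem pdist_le_eccOn_add (huv : G.adj u v = true) (hst : G.adj s t = true) {b : ℝ}
    (hb : b ∈ Icc (0:ℝ) 1) (a a' : ℝ) :
    G.pdist u v a s t b ≤ G.eccOn u v a' + |a - a'| * G.w u v :=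
  (G.pdist_le_pdist_add huv a a' b).trans <| by linarith [G.pdist_le_eccOn u v hst a' hb]

theorem eccOn_le (hst : G.adj s t = true) {a r : ℝ}
    (h : ∀ s' t', G.adj s' t' = true → ∀ b ∈ Icc (0:ℝ) 1, G.pdist u v a s' t' b ≤ r) :
    G.eccOn u v a ≤ r :=
  csSup_le ⟨_, s, t, hst, 0, ⟨le_rfl, zero_le_one⟩, rfl⟩ fun _ ⟨s', t', hst', b, hb, hx⟩ =>
    hx ▸ h s' t' hst' b hb

theorem eccOn_swap (huv : u ≠ v) (a : ℝ) : G.eccOn v u (1 - a) = G.eccOn u v a := by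
  simp only [eccOn, G.pdist_swap huv]

theorem min_le_pdist_of_le (huv : G.adj u v = true) {x a : ℝ} (hx : 0 ≤ x) (hxa : x ≤ a)
    (ha : a ≤ 1) :
    min ((a - x) * G.w u v) (x * G.w u v + G.vdist u v + (1 - a) * G.w u v) ≤
      G.pdist u v x u v a := by
  have hw := (G.wpos u v huv).le
  have hxw := mul_nonneg hx hw
  have haw := mul_nonneg (sub_nonneg.2 ha) hw
  have hr := min_le_left ((a - x) * G.w u v) (x * G.w u v + G.vdist u v + (1 - a) * G.w u v)
  apply G.le_pdist
  · linarith [G.vdist_nonneg u u]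
  · exact min_le_right _ _
  · linarith [G.vdist_nonneg v u]
  · linarith [G.vdist_nonneg v v]
  · intro _ _
    rw [abs_sub_comm, abs_of_nonneg (sub_nonneg.2 hxa)]
    exact min_le_left _ _
  · exact fun h _ _ => absurd ⟨rfl, rfl⟩ h

-- Witness: the point `(w + d(u, v)) / 2` beyond `x` towards `v`, antipodal to `x` on the cycle
-- formed by `uv` and a shortest `u`-`v` path; when that point lies past `v`, take `v` itself.
theorem min_le_eccOn (huv : G.adj u v = true) {x : ℝ} (hx : x ∈ Icc (0:ℝ) 1) :
    min ((1 - x) * G.w u v) ((G.w u v + G.vdist u v) / 2) ≤ G.eccOn u v x := by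
  have hw := G.wpos u v huv
  set D := G.vdist u v
  by_cases hnear : (1 - x) * G.w u v ≤ (G.w u v + D) / 2
  · have hv := G.min_le_pdist_of_le huv hx.1 hx.2 le_rfl
    have hmin : min ((1 - x) * G.w u v) (x * G.w u v + D + (1 - 1) * G.w u v) =
        (1 - x) * G.w u v := min_eq_left (by linarith)
    exact (min_le_left _ _).trans
      (hmin ▸ hv.trans (G.pdist_le_eccOn u v huv x ⟨zero_le_one, le_rfl⟩))
  · set a := x + (G.w u v + D) / (2 * G.w u v)
    have hdist : (a - x) * G.w u v = (G.w u v + D) / 2 := by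
      simp only [a, add_sub_cancel_left]
      field_simp
    have ha : a ≤ 1 := by nlinarith
    have hxa : x ≤ a := by nlinarith [G.vdist_nonneg u v]
    have hp := G.min_le_pdist_of_le huv hx.1 hxa ha
    rw [hdist, show x * G.w u v + D + (1 - a) * G.w u v = (G.w u v + D) / 2 by linarith,
      min_self] at hp
    exact (min_le_right _ _).trans (hp.trans (G.pdist_le_eccOn u v huv x ⟨hx.1.trans hxa, ha⟩))

theorem min_le_eccOn' (huv : G.adj u v = true) {x : ℝ} (hx : x ∈ Icc (0:ℝ) 1) :
    min (x * G.w u v) ((G.w u v + G.vdist v u) / 2) ≤ G.eccOn u v x := by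
  have hvu : G.adj v u = true := G.symm u v ▸ huv
  have h := G.min_le_eccOn hvu (x := 1 - x) ⟨by linarith [hx.2], by linarith [hx.1]⟩
  rwa [sub_sub_cancel, G.wsymm v u, G.eccOn_swap (G.ne_of_adj huv)] at h

theorem sub_mul_lt_eccOn_add_eccOn (hconn : G.toSimple.Connected) (huv : G.adj u v = true)
    {x z : ℝ} (hx : x ∈ Icc (0:ℝ) 1) (hz : z ∈ Icc (0:ℝ) 1) :
    (z - x) * G.w u v < G.eccOn u v x + G.eccOn u v z := by
  have hw := G.wpos u v huv
  have hD := G.vdist_pos hconn (G.ne_of_adj huv)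
  have hD' := G.vdist_pos hconn (G.ne_of_adj huv).symm
  have hxw := mul_nonneg hx.1 hw.le
  have hzw := mul_le_of_le_one_left hw.le hz.2
  rcases min_le_iff.1 (G.min_le_eccOn huv hx) with hex | hex <;>
    rcases min_le_iff.1 (G.min_le_eccOn' huv hz) with hez | hez <;>
    nlinarith

end WGraph

/-- Lemma 8: the set of points on an edge `uv` having the fixed point `g` (the point at
parameter `mu` on edge `st`) as a farthest point is a (possibly empty) subinterval of
`uv`. -/
theorem farthest_point_set_on_edge_is_interval (n : ℕ) (G : WGraph n)
    (hconn : G.toSimple.Connected) (u v s t : Fin n)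
    (huv : G.adj u v = true) (hst : G.adj s t = true) (mu : ℝ) (hmu : mu ∈ Icc (0:ℝ) 1) :
    ({lam | lam ∈ Icc (0:ℝ) 1 ∧ G.pdist u v lam s t mu = G.eccOn u v lam}).OrdConnected := by
  refine ⟨fun x ⟨hx, hfx⟩ z ⟨hz, hfz⟩ y ⟨hxy, hyz⟩ => ?_⟩
  have hy : y ∈ Icc (0:ℝ) 1 := ⟨hx.1.trans hxy, hyz.trans hz.2⟩
  refine ⟨hy, le_antisymm (G.pdist_le_eccOn u v hst y hmu)
    (G.eccOn_le hst fun s' t' hst' b hb => ?_)⟩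
  have hsum := G.sub_mul_lt_eccOn_add_eccOn hconn huv hx hz
  have hleft := G.pdist_le_eccOn_add huv hst' hb y x
  have hright := G.pdist_le_eccOn_add huv hst' hb y z
  rw [abs_of_nonneg (sub_nonneg.2 hxy)] at hleft
  rw [abs_of_nonpos (sub_nonpos.2 hyz), neg_sub] at hright
  apply G.le_pdist
  · linarith [G.pdist_le_route_us u v s t x mu]
  · linarith [G.pdist_le_route_ut u v s t x mu]
  · linarith [G.pdist_le_route_vs u v s t z mu]
  · linarith [G.pdist_le_route_vt u v s t z mu]
  · intro h₁ h₂
    exact le_abs_sub_mul_of_le hxy hyz (hfx ▸ G.pdist_le_along ⟨h₁, h₂⟩ x mu)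
      (hfz ▸ G.pdist_le_along ⟨h₁, h₂⟩ z mu) hsum hleft hright
  · intro h h₁ h₂
    exact le_abs_sub_mul_of_le hxy hyz (hfx ▸ G.pdist_le_along_rev h ⟨h₁, h₂⟩ x mu)
      (hfz ▸ G.pdist_le_along_rev h ⟨h₁, h₂⟩ z mu) hsum hleft hright
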